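/- Let D ≥ 1 and let R_{μναβ} be a smooth tensor field on ℝ^D with the algebraic Riemann symmetries (R_{μναβ} = −R_{νμαβ} = −R_{μνβα} = R_{αβμν} and R_{μναβ} + R_{ναμβ} + R_{αμνβ} = 0) satisfying the second Bianchi identity ∂_λ R_{μναβ} + ∂_μ R_{νλαβ} + ∂_ν R_{λμαβ} = 0 identically on ℝ^D. Define the smooth symmetric field h_{αβ}(x) := ∫₀¹ dt ∫₀^t dt′ t′ Σ_{λ,μ} x^λ x^μ R_{αλβμ}(t′x). Then R_{μναβ} = ∂_μ∂_α h_{νβ} − ∂_ν∂_α h_{μβ} − ∂_μ∂_β h_{να} + ∂_ν∂_β h_{μα} identically on ℝ^D. -/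

import Mathlib

/-!
By Cauchy's formula for repeated integrals, `h_{ab}(x) = ∫₀¹ (t - t²) x^l x^r R_{albr}(t x) dt`.
Put `φ(t) = R_{μναβ}(t x)`. Differentiating under the integral sign, the combination of second
derivatives of the integrand equals `(t - t²) (6 φ + 6 t φ' + t² φ'')`: its terms of order `t⁰`,
`t¹` and `t²` collapse by the algebraic symmetries of `R`, by these together with the Bianchi
identity, and by the differentiated Bianchi identity together with the symmetry of second
derivatives. Since `(t - t²) (6 φ + 6 t φ' + t² φ'') = (1 - t) (t³ φ)''`, Taylor's formula with
integral remainder for `t³ φ` at `0` gives `∫₀¹ (1 - t) (t³ φ)'' dt = φ(1) = R_{μναβ}(x)`.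
-/

/-- The partial derivative `∂_μ f` of a function `f : ℝ^D → ℝ`. -/
noncomputable def pd {D : ℕ} (μ : Fin D) (f : (Fin D → ℝ) → ℝ) : (Fin D → ℝ) → ℝ :=
  fun x => fderiv ℝ f x (Pi.single μ 1)

open Finset Set MeasureTheory Metric intervalIntegral

theorem integral_integral_eq_integral_sub_mul {g : ℝ → ℝ} (hg : Continuous g) (a b : ℝ) :
    ∫ t in a..b, ∫ s in a..t, g s = ∫ s in a..b, (b - s) * g s := by
  have hG : ∀ t ∈ uIcc a b, HasDerivAt (fun u => ∫ s in a..u, g s) (g t) t := fun t _ =>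
    integral_hasDerivAt_right (hg.intervalIntegrable a t) (hg.stronglyMeasurableAtFilter _ _)
      hg.continuousAt
  have hparts := integral_mul_deriv_eq_deriv_mul hG
    (fun t _ => (hasDerivAt_id' t).sub_const b) (hg.intervalIntegrable a b) intervalIntegrable_const
  simp only [mul_one, sub_self, mul_zero, integral_same, zero_mul, zero_sub] at hparts
  rw [hparts, ← intervalIntegral.integral_neg]
  exact integral_congr fun s _ => by ring

theorem integral_sub_sq_mul_eq_apply_one {φ φ' φ'' : ℝ → ℝ} (hφ : ∀ t, HasDerivAt φ (φ' t) t)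
    (hφ' : ∀ t, HasDerivAt φ' (φ'' t) t) (hφ'' : Continuous φ'') :
    ∫ t in (0 : ℝ)..1, (t - t ^ 2) * (6 * φ t + 6 * t * φ' t + t ^ 2 * φ'' t) = φ 1 := by
  -- `(1 - t) (t³ φ)' + t³ φ` is an antiderivative of `(1 - t) (t³ φ)''`
  have hψ : ∀ t ∈ uIcc (0 : ℝ) 1,
      HasDerivAt (fun s => (3 * s ^ 2 - 2 * s ^ 3) * φ s + (s ^ 3 - s ^ 4) * φ' s)
        ((t - t ^ 2) * (6 * φ t + 6 * t * φ' t + t ^ 2 * φ'' t)) t := fun t _ => by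
    have hpoly₁ := ((hasDerivAt_pow 2 t).const_mul 3).fun_sub ((hasDerivAt_pow 3 t).const_mul 2)
    have hpoly₂ := (hasDerivAt_pow 3 t).fun_sub (hasDerivAt_pow 4 t)
    refine ((hpoly₁.fun_mul (hφ t)).fun_add (hpoly₂.fun_mul (hφ' t))).congr_deriv ?_
    norm_num
    ring
  have hcont : Continuous fun t => (t - t ^ 2) * (6 * φ t + 6 * t * φ' t + t ^ 2 * φ'' t) := by
    have hφc : Continuous φ := continuous_iff_continuousAt.2 fun t => (hφ t).continuousAt
    have hφ'c : Continuous φ' := continuous_iff_continuousAt.2 fun t => (hφ' t).continuousAt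
    fun_prop
  rw [integral_eq_sub_of_hasDerivAt hψ (hcont.intervalIntegrable 0 1)]
  norm_num

section ParametricIntegral

variable {H : Type*} [NormedAddCommGroup H] [NormedSpace ℝ H] {F : H × ℝ → ℝ}

theorem hasFDerivAt_slice {x : H} {t : ℝ} (hF : DifferentiableAt ℝ F (x, t)) :
    HasFDerivAt (fun y => F (y, t)) ((fderiv ℝ F (x, t)).comp (.inl ℝ H ℝ)) x :=
  hF.hasFDerivAt.comp x (hasFDerivAt_prodMk_left x t)

theorem hasFDerivAt_intervalIntegral_slice [ProperSpace H] (hF : ContDiff ℝ 1 F) (a b : ℝ)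
    (x : H) :
    HasFDerivAt (fun y => ∫ t in a..b, F (y, t))
      (∫ t in a..b, (fderiv ℝ F (x, t)).comp (.inl ℝ H ℝ)) x := by
  have hF' : Continuous fun p => (fderiv ℝ F p).comp (.inl ℝ H ℝ) :=
    (hF.continuous_fderiv one_ne_zero).clm_comp continuous_const
  obtain ⟨C, hC⟩ := ((isCompact_closedBall x 1).prod isCompact_uIcc).exists_bound_of_continuousOn
    hF'.continuousOn
  exact hasFDerivAt_integral_of_dominated_of_fderiv_le (bound := fun _ => C)
    (ball_mem_nhds x one_pos)
    (.of_forall fun y => (hF.continuous.comp (.prodMk_right y)).aestronglyMeasurable)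
    ((hF.continuous.comp (.prodMk_right x)).intervalIntegrable a b)
    (hF'.comp (.prodMk_right x)).aestronglyMeasurable
    (.of_forall fun t ht y hy => hC (y, t) ⟨ball_subset_closedBall hy, uIoc_subset_uIcc ht⟩)
    intervalIntegrable_const
    (.of_forall fun t _ y _ => hasFDerivAt_slice (hF.differentiable one_ne_zero _))

end ParametricIntegral

section PartialDerivative

variable {D : ℕ} {f g k : (Fin D → ℝ) → ℝ} {x : Fin D → ℝ} {t : ℝ}

theorem contDiff_pd (hf : ContDiff ℝ (⊤ : ℕ∞) f) (c : Fin D) : ContDiff ℝ (⊤ : ℕ∞) (pd c f) :=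
  (hf.fderiv_right (by norm_num)).clm_apply contDiff_const

theorem pd_const_mul (a : ℝ) (c : Fin D) : pd c (fun y => a * f y) = fun y => a * pd c f y := by
  funext y
  simp [pd, ← smul_eq_mul, ← Pi.smul_def, fderiv_const_smul_field]

theorem pd_eq_neg (hfg : ∀ y, f y = -g y) (c : Fin D) (x : Fin D → ℝ) :
    pd c f x = -pd c g x := by
  simp [pd, funext hfg, fderiv_fun_neg]

theorem pd_add (hf : DifferentiableAt ℝ f x) (hg : DifferentiableAt ℝ g x) (c : Fin D) :
    pd c (fun y => f y + g y) x = pd c f x + pd c g x := by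
  simp [pd, fderiv_fun_add hf hg]

theorem pd_add_add_eq_zero (hf : DifferentiableAt ℝ f x) (hg : DifferentiableAt ℝ g x)
    (hk : DifferentiableAt ℝ k x) (hfgk : ∀ y, f y + g y + k y = 0) (c : Fin D) :
    pd c f x + pd c g x + pd c k x = 0 := by
  rw [← pd_add hf hg, ← pd_add (f := fun y => f y + g y) (hf.add hg) hk]
  simp [pd, hfgk]

theorem pd_mul (hf : DifferentiableAt ℝ f x) (hg : DifferentiableAt ℝ g x) (c : Fin D) :
    pd c (fun y => f y * g y) x = pd c f x * g x + f x * pd c g x := by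
  simp [pd, fderiv_fun_mul hf hg]
  ring

theorem pd_sum {ι : Type*} (s : Finset ι) {F : ι → (Fin D → ℝ) → ℝ}
    (hF : ∀ i ∈ s, DifferentiableAt ℝ (F i) x) (c : Fin D) :
    pd c (fun y => ∑ i ∈ s, F i y) x = ∑ i ∈ s, pd c (F i) x := by
  simp [pd, fderiv_fun_sum hF]

theorem pd_apply (l c : Fin D) (x : Fin D → ℝ) :
    pd c (fun y => y l) x = if c = l then 1 else 0 := by
  simp [pd, fderiv_apply, Pi.single_apply, eq_comm]

theorem pd_comp_smul (hf : Differentiable ℝ f) (t : ℝ) (c : Fin D) (x : Fin D → ℝ) :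
    pd c (fun y => f (t • y)) x = t * pd c f (t • x) := by
  have := ((hf (t • x)).hasFDerivAt.comp x ((hasFDerivAt_id x).const_smul t)).fderiv
  simp [pd, Function.comp_def] at this ⊢
  simp [this]

theorem fderiv_apply_eq_sum_pd (v : Fin D → ℝ) :
    fderiv ℝ f x v = ∑ r, v r * pd r f x := by
  conv_lhs => rw [← univ_sum_single v]
  rw [map_sum]
  refine sum_congr rfl fun r _ => ?_
  rw [show Pi.single r (v r) = v r • Pi.single r (1 : ℝ) by ext j; simp [Pi.single_apply],
    map_smul, smul_eq_mul]
  rfl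

theorem hasDerivAt_comp_smul (hf : Differentiable ℝ f) (x : Fin D → ℝ) (t : ℝ) :
    HasDerivAt (fun s : ℝ => f (s • x)) (∑ r, x r * pd r f (t • x)) t := by
  have := (hf (t • x)).hasFDerivAt.comp_hasDerivAt t ((hasDerivAt_id t).smul_const x)
  rwa [one_smul, fderiv_apply_eq_sum_pd] at this

theorem pd_comm (hf : ContDiff ℝ (⊤ : ℕ∞) f) (c m : Fin D) (x : Fin D → ℝ) :
    pd c (pd m f) x = pd m (pd c f) x := by
  have hsymm : IsSymmSndFDerivAt ℝ f x :=
    (hf.contDiffAt.of_le (m := 2) (WithTop.coe_le_coe.mpr le_top)).isSymmSndFDerivAt (by simp)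
  have hd : DifferentiableAt ℝ (fderiv ℝ f) x :=
    (hf.fderiv_right (m := (⊤ : ℕ∞)) (by norm_num)).differentiable (by simp) x
  have key : ∀ v w, fderiv ℝ (fun y => fderiv ℝ f y w) x v = fderiv ℝ (fderiv ℝ f) x v w := by
    intro v w
    rw [fderiv_clm_apply hd (differentiableAt_const w)]
    simp
  show fderiv ℝ (fun y => fderiv ℝ f y _) x _ = fderiv ℝ (fun y => fderiv ℝ f y _) x _
  exact (key _ _).trans ((hsymm _ _).trans (key _ _).symm)

theorem integral_sub_sq_mul_radial_eq (hf : ContDiff ℝ (⊤ : ℕ∞) f) (x : Fin D → ℝ) :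
    ∫ t in (0 : ℝ)..1, (t - t ^ 2) * (6 * f (t • x) + 6 * t * ∑ r, x r * pd r f (t • x)
      + t ^ 2 * ∑ r, x r * ∑ l, x l * pd l (pd r f) (t • x)) = f x := by
  have hpd : ∀ r, ContDiff ℝ (⊤ : ℕ∞) (pd r f) := contDiff_pd hf
  have hpd₂ : ∀ r l, Continuous (pd l (pd r f)) := fun r l => (contDiff_pd (hpd r) l).continuous
  have hφ' := fun t => HasDerivAt.fun_sum fun r (_ : r ∈ Finset.univ) =>
    (hasDerivAt_comp_smul ((hpd r).differentiable (by simp)) x t).const_mul (x r)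
  rw [integral_sub_sq_mul_eq_apply_one (hasDerivAt_comp_smul (hf.differentiable (by simp)) x)
    hφ' (by fun_prop), one_smul]

variable {F : (Fin D → ℝ) × ℝ → ℝ}

theorem pd_slice (hF : DifferentiableAt ℝ F (x, t)) (c : Fin D) :
    pd c (fun y => F (y, t)) x = fderiv ℝ F (x, t) (Pi.single c 1, 0) := by
  rw [pd, (hasFDerivAt_slice hF).fderiv]
  rfl

theorem contDiff_pd_slice (hF : ContDiff ℝ (⊤ : ℕ∞) F) (c : Fin D) :
    ContDiff ℝ (⊤ : ℕ∞) fun p : (Fin D → ℝ) × ℝ => pd c (fun y => F (y, p.2)) p.1 := by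
  simp_rw [pd_slice ((hF.differentiable (by simp)) _)]
  exact (hF.fderiv_right (by norm_num)).clm_apply contDiff_const

theorem continuous_pd_slice (hF : ContDiff ℝ (⊤ : ℕ∞) F) (c : Fin D) (x : Fin D → ℝ) :
    Continuous fun t => pd c (fun y => F (y, t)) x :=
  (contDiff_pd_slice hF c).continuous.comp (.prodMk_right x)

theorem pd_intervalIntegral (hF : ContDiff ℝ 1 F) (c : Fin D) (a b : ℝ) (x : Fin D → ℝ) :
    pd c (fun y => ∫ t in a..b, F (y, t)) x = ∫ t in a..b, pd c (fun y => F (y, t)) x := by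
  have hF' : Continuous fun t => (fderiv ℝ F (x, t)).comp (.inl ℝ (Fin D → ℝ) ℝ) :=
    ((hF.continuous_fderiv one_ne_zero).comp (.prodMk_right x)).clm_comp continuous_const
  rw [pd, (hasFDerivAt_intervalIntegral_slice hF a b x).fderiv,
    ContinuousLinearMap.intervalIntegral_apply (hF'.intervalIntegrable a b)]
  exact integral_congr fun t _ => (pd_slice (hF.differentiable one_ne_zero _) c).symm

theorem pd_pd_intervalIntegral (hF : ContDiff ℝ (⊤ : ℕ∞) F) (c m : Fin D) (a b : ℝ)
    (x : Fin D → ℝ) :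
    pd m (pd c fun y => ∫ t in a..b, F (y, t)) x
      = ∫ t in a..b, pd m (pd c fun y => F (y, t)) x := by
  rw [show pd c (fun y => ∫ t in a..b, F (y, t))
      = fun z => ∫ t in a..b, pd c (fun y => F (y, t)) z from
    funext fun z => pd_intervalIntegral (hF.of_le (by simp)) c a b z]
  exact pd_intervalIntegral ((contDiff_pd_slice hF c).of_le (by simp)) m a b x

end PartialDerivative

section PositionContraction

variable {D : ℕ}

noncomputable def posContract (S : Fin D → (Fin D → ℝ) → ℝ) (t : ℝ) (y : Fin D → ℝ) : ℝ :=
  ∑ r, y r * S r (t • y)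

noncomputable def posContract₂ (T : Fin D → Fin D → (Fin D → ℝ) → ℝ) (t : ℝ) (y : Fin D → ℝ) : ℝ :=
  ∑ l, ∑ r, y l * y r * T l r (t • y)

theorem contDiff_posContract₂ {T : Fin D → Fin D → (Fin D → ℝ) → ℝ}
    (hT : ∀ l r, ContDiff ℝ (⊤ : ℕ∞) (T l r)) :
    ContDiff ℝ (⊤ : ℕ∞) (fun p : (Fin D → ℝ) × ℝ => posContract₂ T p.2 p.1) := by
  unfold posContract₂
  fun_prop

theorem pd_posContract {S : Fin D → (Fin D → ℝ) → ℝ} (hS : ∀ r, Differentiable ℝ (S r))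
    (t : ℝ) (m : Fin D) (x : Fin D → ℝ) :
    pd m (posContract S t) x = S m (t • x) + t * posContract (fun r => pd m (S r)) t x := by
  have hSt : ∀ r, Differentiable ℝ fun y : Fin D → ℝ => S r (t • y) := fun r => by fun_prop
  have hterm : ∀ r, pd m (fun y => y r * S r (t • y)) x
      = (if m = r then S r (t • x) else 0) + t * (x r * pd m (S r) (t • x)) := fun r => by
    rw [pd_mul (differentiableAt_apply r x) (hSt r x), pd_apply, pd_comp_smul (hS r)]
    split_ifs <;> ring
  unfold posContract
  rw [pd_sum _ (fun r _ => by fun_prop), sum_congr rfl fun r _ => hterm r, sum_add_distrib,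
    sum_ite_eq, if_pos (Finset.mem_univ _), mul_sum]

theorem pd_posContract₂ {T : Fin D → Fin D → (Fin D → ℝ) → ℝ}
    (hT : ∀ l r, Differentiable ℝ (T l r)) (t : ℝ) (c : Fin D) :
    pd c (posContract₂ T t) = fun y => posContract (T c) t y + posContract (fun l => T l c) t y
      + t * posContract₂ (fun l r => pd c (T l r)) t y := by
  funext x
  have hsplit : posContract₂ T t = fun y => ∑ l, y l * posContract (T l) t y := by
    funext y
    simp only [posContract₂, posContract, mul_sum, mul_assoc]
  have hP : ∀ l, Differentiable ℝ (posContract (T l) t) := fun l => by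
    unfold posContract; fun_prop
  have hterm : ∀ l, pd c (fun y => y l * posContract (T l) t y) x
      = (if c = l then posContract (T l) t x else 0)
        + (x l * T l c (t • x) + t * (x l * posContract (fun r => pd c (T l r)) t x)) := fun l => by
    rw [pd_mul (differentiableAt_apply l x) (hP l x), pd_apply, pd_posContract (hT l)]
    split_ifs <;> ring
  rw [hsplit, pd_sum _ (fun l _ => by fun_prop), sum_congr rfl fun l _ => hterm l, sum_add_distrib,
    sum_ite_eq, if_pos (Finset.mem_univ _), sum_add_distrib, ← mul_sum]
  simp only [posContract, posContract₂, mul_sum, mul_assoc, add_assoc]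

theorem pd_pd_posContract₂ {T : Fin D → Fin D → (Fin D → ℝ) → ℝ}
    (hT : ∀ l r, ContDiff ℝ (⊤ : ℕ∞) (T l r)) (t : ℝ) (c m : Fin D) (x : Fin D → ℝ) :
    pd m (pd c (posContract₂ T t)) x = T c m (t • x) + T m c (t • x)
      + t * ∑ r, x r * (pd m (T c r) (t • x) + pd m (T r c) (t • x)
          + pd c (T m r) (t • x) + pd c (T r m) (t • x))
      + t ^ 2 * ∑ l, ∑ r, x l * x r * pd m (pd c (T l r)) (t • x) := by
  have hd : ∀ l r, Differentiable ℝ (T l r) := fun l r => (hT l r).differentiable (by simp)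
  have hd' : ∀ l r, Differentiable ℝ (pd c (T l r)) := fun l r =>
    (contDiff_pd (hT l r) c).differentiable (by simp)
  have hP : ∀ S : Fin D → (Fin D → ℝ) → ℝ, (∀ r, Differentiable ℝ (S r)) →
      Differentiable ℝ (posContract S t) := fun S hS => by unfold posContract; fun_prop
  have hP₂ : Differentiable ℝ (posContract₂ (fun l r => pd c (T l r)) t) := by
    unfold posContract₂; fun_prop
  rw [pd_posContract₂ hd,
    pd_add (f := fun y => posContract (T c) t y + posContract (fun l => T l c) t y)
      ((hP _ (hd c)).add (hP _ (hd · c)) x) (hP₂.const_mul t x),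
    pd_add (hP _ (hd c) x) (hP _ (hd · c) x), pd_const_mul, pd_posContract (hd c),
    pd_posContract (hd · c), pd_posContract₂ hd']
  simp only [posContract, posContract₂, mul_add, sum_add_distrib, mul_sum, pow_two, mul_assoc]
  ring

end PositionContraction

section CurvatureTensor

variable {ι : Type*}

structure IsCurvatureTensor (T : ι → ι → ι → ι → ℝ) : Prop where
  antisymm_left : ∀ a b c d, T a b c d = -T b a c d
  antisymm_right : ∀ a b c d, T a b c d = -T a b d c
  pair_symm : ∀ a b c d, T a b c d = T c d a b
  cyclic : ∀ a b c d, T a b c d + T b c a d + T c a b d = 0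

def SatisfiesBianchi (P : ι → ι → ι → ι → ι → ℝ) : Prop :=
  ∀ l a b c d, P l a b c d + P a b l c d + P b l a c d = 0

namespace IsCurvatureTensor

variable {T : ι → ι → ι → ι → ℝ}

theorem sub_swap (hT : IsCurvatureTensor T) (a b c d : ι) :
    T a b c d - T a c b d = T c b a d := by
  linarith [hT.cyclic a b c d, hT.antisymm_left c a b d, hT.antisymm_left b c a d]

theorem symmetrized_sub (hT : IsCurvatureTensor T) (a b c d : ι) :
    (T a c b d + T a d b c) - (T a b c d + T a d c b) = 3 * T b c a d := by
  linarith [hT.sub_swap a c b d, hT.antisymm_right a d b c, hT.pair_symm a d b c]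

theorem linearized_sum (hT : IsCurvatureTensor T) (μ ν α β : ι) :
    (T ν α β μ + T ν μ β α) - (T μ α β ν + T μ ν β α) - (T ν β α μ + T ν μ α β)
      + (T μ β α ν + T μ ν α β) = 6 * T μ ν α β := by
  linarith [hT.symmetrized_sub ν β α μ, hT.symmetrized_sub μ α β ν, hT.pair_symm β α ν μ,
    hT.pair_symm α β μ ν, hT.antisymm_left ν μ β α, hT.antisymm_right μ ν β α]

end IsCurvatureTensor

namespace SatisfiesBianchi

variable {P : ι → ι → ι → ι → ι → ℝ}

theorem sub_eq (hB : SatisfiesBianchi P) (hP : ∀ e, IsCurvatureTensor (P e)) (m n l c d : ι) :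
    P m n l c d - P n m l c d = -P l m n c d := by
  linarith [hB l m n c d, (hP n).antisymm_left l m c d]

theorem linearized_sum (hB : SatisfiesBianchi P) (hP : ∀ e, IsCurvatureTensor (P e))
    (μ ν α β r : ι) :
    (P μ ν α β r + P μ ν r β α + P α ν μ β r + P α ν r β μ)
      - (P ν μ α β r + P ν μ r β α + P α μ ν β r + P α μ r β ν)
      - (P μ ν β α r + P μ ν r α β + P β ν μ α r + P β ν r α μ)
      + (P ν μ β α r + P ν μ r α β + P β μ ν α r + P β μ r α ν) = 6 * P r μ ν α β := by
  -- The groups differing by `α ↔ β` collapse to `3 P` by `symmetrized_sub`; the four resulting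
  -- terms pair up by the Bianchi identity.
  have hμ := (hP μ).symmetrized_sub ν β α r
  have hν := (hP ν).symmetrized_sub μ α β r
  have hα := (hP α).symmetrized_sub β ν μ r
  have hβ := (hP β).symmetrized_sub α μ ν r
  have hμν := hB.sub_eq hP μ ν r α β
  have hβα := hB.sub_eq hP β α r μ ν
  linarith [(hP α).pair_symm ν μ β r, (hP α).pair_symm ν r β μ, (hP α).pair_symm μ ν β r,
    (hP α).pair_symm μ r β ν, (hP β).pair_symm μ ν α r, (hP β).pair_symm μ r α ν,
    (hP β).pair_symm ν μ α r, (hP β).pair_symm ν r α μ, (hP μ).pair_symm β α ν r,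
    (hP μ).antisymm_right ν r β α, (hP ν).pair_symm α β μ r, (hP α).antisymm_right β r ν μ,
    (hP β).pair_symm μ ν α r, (hP r).antisymm_left β α μ ν, (hP r).pair_symm α β μ ν]

theorem linearized_sum_of_comm {S : ι → ι → ι → ι → ι → ι → ℝ} (hB : ∀ m, SatisfiesBianchi (S m))
    (hS : ∀ m e, IsCurvatureTensor (S m e)) (hcomm : ∀ m e, S m e = S e m) (μ ν α β l r : ι) :
    S μ α ν l β r - S ν α μ l β r - S μ β ν l α r + S ν β μ l α r = S l r μ ν α β := by
  have hαl : S α l μ ν β r = S l α β r μ ν := by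
    rw [hcomm α l, (hS l α).pair_symm]
  have hβl : S β l μ ν α r = S l β α r μ ν := by
    rw [hcomm β l, (hS l β).pair_symm]
  rw [hcomm μ α, hcomm ν α, hcomm μ β, hcomm ν β]
  linarith [(hB α).sub_eq (hS α) μ ν l β r, (hB β).sub_eq (hS β) μ ν l α r,
    (hB l).sub_eq (hS l) β α r μ ν, (hS l r).antisymm_left β α μ ν, (hS l r).pair_symm α β μ ν]

end SatisfiesBianchi

end CurvatureTensor

section CurvatureField

variable {D : ℕ}

theorem isCurvatureTensor_pd {R : Fin D → Fin D → Fin D → Fin D → (Fin D → ℝ) → ℝ}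
    (hR : ∀ a b c d, Differentiable ℝ (R a b c d))
    (hcurv : ∀ y, IsCurvatureTensor fun a b c d => R a b c d y) (e : Fin D) (x : Fin D → ℝ) :
    IsCurvatureTensor fun a b c d => pd e (R a b c d) x where
  antisymm_left a b c d := pd_eq_neg (fun y => (hcurv y).antisymm_left a b c d) e x
  antisymm_right a b c d := pd_eq_neg (fun y => (hcurv y).antisymm_right a b c d) e x
  pair_symm a b c d := by rw [funext fun y => (hcurv y).pair_symm a b c d]
  cyclic a b c d := pd_add_add_eq_zero (hR _ _ _ _ x) (hR _ _ _ _ x) (hR _ _ _ _ x)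
    (fun y => (hcurv y).cyclic a b c d) e

theorem satisfiesBianchi_pd {G : Fin D → Fin D → Fin D → Fin D → Fin D → (Fin D → ℝ) → ℝ}
    (hG : ∀ e a b c d, Differentiable ℝ (G e a b c d))
    (hB : ∀ y, SatisfiesBianchi fun e a b c d => G e a b c d y) (m : Fin D) (x : Fin D → ℝ) :
    SatisfiesBianchi fun e a b c d => pd m (G e a b c d) x := fun l a b c d =>
  pd_add_add_eq_zero (hG _ _ _ _ _ x) (hG _ _ _ _ _ x) (hG _ _ _ _ _ x)
    (fun y => hB y l a b c d) m

/-- Up to a constant factor, the linearized Riemann tensor of the metric perturbation `h`. -/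
noncomputable def linearizedRiemann (h : Fin D → Fin D → (Fin D → ℝ) → ℝ) (μ ν α β : Fin D)
    (x : Fin D → ℝ) : ℝ :=
  pd μ (pd α (h ν β)) x - pd ν (pd α (h μ β)) x - pd μ (pd β (h ν α)) x + pd ν (pd β (h μ α)) x

theorem linearizedRiemann_const_mul (h : Fin D → Fin D → (Fin D → ℝ) → ℝ) (s : ℝ)
    (μ ν α β : Fin D) (x : Fin D → ℝ) :
    linearizedRiemann (fun a b y => s * h a b y) μ ν α β x = s * linearizedRiemann h μ ν α β x := by
  simp only [linearizedRiemann, pd_const_mul]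
  ring

theorem linearizedRiemann_intervalIntegral {F : Fin D → Fin D → (Fin D → ℝ) × ℝ → ℝ}
    (hF : ∀ a b, ContDiff ℝ (⊤ : ℕ∞) (F a b)) (s₀ s₁ : ℝ) (μ ν α β : Fin D) (x : Fin D → ℝ) :
    linearizedRiemann (fun a b y => ∫ t in s₀..s₁, F a b (y, t)) μ ν α β x
      = ∫ t in s₀..s₁, linearizedRiemann (fun a b y => F a b (y, t)) μ ν α β x := by
  have hint : ∀ a b c m, IntervalIntegrable (fun t => pd m (pd c fun y => F a b (y, t)) x)
      volume s₀ s₁ := fun a b c m =>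
    (continuous_pd_slice (contDiff_pd_slice (hF a b) c) m x).intervalIntegrable s₀ s₁
  simp only [linearizedRiemann, pd_pd_intervalIntegral (hF _ _)]
  rw [← integral_sub (hint _ _ _ _) (hint _ _ _ _),
    ← integral_sub ((hint _ _ _ _).sub (hint _ _ _ _)) (hint _ _ _ _),
    ← integral_add (((hint _ _ _ _).sub (hint _ _ _ _)).sub (hint _ _ _ _)) (hint _ _ _ _)]

theorem linearizedRiemann_posContract₂ {R : Fin D → Fin D → Fin D → Fin D → (Fin D → ℝ) → ℝ}
    (hR : ∀ a b c d, ContDiff ℝ (⊤ : ℕ∞) (R a b c d))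
    (hcurv : ∀ y, IsCurvatureTensor fun a b c d => R a b c d y)
    (hB : ∀ y, SatisfiesBianchi fun e a b c d => pd e (R a b c d) y)
    (t : ℝ) (μ ν α β : Fin D) (x : Fin D → ℝ) :
    linearizedRiemann (fun a b => posContract₂ (fun l r => R a l b r) t) μ ν α β x
      = 6 * R μ ν α β (t • x) + 6 * t * ∑ r, x r * pd r (R μ ν α β) (t • x)
        + t ^ 2 * ∑ r, x r * ∑ l, x l * pd l (pd r (R μ ν α β)) (t • x) := by
  have hd : ∀ a b c d, Differentiable ℝ (R a b c d) := fun a b c d =>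
    (hR a b c d).differentiable (by simp)
  have hd' : ∀ e a b c d, Differentiable ℝ (pd e (R a b c d)) := fun e a b c d =>
    (contDiff_pd (hR a b c d) e).differentiable (by simp)
  have hP := isCurvatureTensor_pd hd hcurv
  have hS : ∀ m e, IsCurvatureTensor fun a b c d => pd m (pd e (R a b c d)) (t • x) :=
    fun m e => isCurvatureTensor_pd (hd' e) (hP e) m _
  have hcomm : ∀ m e, (fun a b c d => pd m (pd e (R a b c d)) (t • x))
      = fun a b c d => pd e (pd m (R a b c d)) (t • x) := fun m e => by
    funext a b c d
    exact pd_comm (hR a b c d) m e _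
  have h₀ := (hcurv (t • x)).linearized_sum μ ν α β
  have h₁ := sum_congr rfl fun r (_ : r ∈ Finset.univ) =>
    congrArg (x r * ·) ((hB (t • x)).linearized_sum (hP · _) μ ν α β r)
  have h₂ := sum_congr rfl fun l (_ : l ∈ Finset.univ) =>
    sum_congr rfl fun r (_ : r ∈ Finset.univ) =>
      congrArg (x l * x r * ·) (SatisfiesBianchi.linearized_sum_of_comm
        (fun m => satisfiesBianchi_pd hd' hB m (t • x)) hS hcomm μ ν α β l r)
  have hsum₁ : ∑ r, x r * (6 * pd r (R μ ν α β) (t • x))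
      = 6 * ∑ r, x r * pd r (R μ ν α β) (t • x) := by
    rw [mul_sum]
    exact sum_congr rfl fun r _ => by ring
  have hsum₂ : ∑ l, ∑ r, x l * x r * pd l (pd r (R μ ν α β)) (t • x)
      = ∑ r, x r * ∑ l, x l * pd l (pd r (R μ ν α β)) (t • x) := by
    rw [sum_comm]
    refine sum_congr rfl fun r _ => ?_
    rw [mul_sum]
    exact sum_congr rfl fun l _ => by ring
  replace h₁ := h₁.trans hsum₁
  replace h₂ := h₂.trans hsum₂
  simp only [linearizedRiemann, pd_pd_posContract₂ (fun l r => hR _ l _ r)]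
  simp only [mul_add, mul_sub, sum_add_distrib, sum_sub_distrib] at h₁ h₂ ⊢
  linear_combination h₀ + t * h₁ + t ^ 2 * h₂

end CurvatureField

theorem riemann_homotopy_formula_general (D : ℕ)
    (R : Fin D → Fin D → Fin D → Fin D → (Fin D → ℝ) → ℝ)
    (hsmooth : ∀ μ ν α β, ContDiff ℝ (⊤ : ℕ∞) (R μ ν α β))
    (hanti1 : ∀ μ ν α β x, R μ ν α β x = - R ν μ α β x)
    (hanti2 : ∀ μ ν α β x, R μ ν α β x = - R μ ν β α x)
    (hpair : ∀ μ ν α β x, R μ ν α β x = R α β μ ν x)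
    (hcyclic : ∀ μ ν α β x, R μ ν α β x + R ν α μ β x + R α μ ν β x = 0)
    (hbianchi : ∀ lam μ ν α β x,
      pd lam (R μ ν α β) x + pd μ (R ν lam α β) x + pd ν (R lam μ α β) x = 0)
    (h : Fin D → Fin D → (Fin D → ℝ) → ℝ)
    (hh : ∀ α β x, h α β x =
      ∫ t in (0:ℝ)..1, ∫ t' in (0:ℝ)..t,
        t' * ∑ lam : Fin D, ∑ μ : Fin D, x lam * x μ * R α lam β μ (t' • x)) :
    ∀ μ ν α β x,
      R μ ν α β x = pd μ (pd α (h ν β)) x - pd ν (pd α (h μ β)) x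
        - pd μ (pd β (h ν α)) x + pd ν (pd β (h μ α)) x := by
  intro μ ν α β x
  have hcurv : ∀ y, IsCurvatureTensor fun a b c d => R a b c d y := fun y =>
    ⟨(hanti1 · · · · y), (hanti2 · · · · y), (hpair · · · · y), (hcyclic · · · · y)⟩
  have hpot : h = fun a b y => ∫ t in (0 : ℝ)..1,
      (t - t ^ 2) * posContract₂ (fun l r => R a l b r) t y := by
    funext a b y
    rw [hh, integral_integral_eq_integral_sub_mul (by fun_prop)]
    exact integral_congr fun t _ => by simp only [posContract₂]; ring
  calc R μ ν α β x
      = ∫ t in (0 : ℝ)..1, (t - t ^ 2) * (6 * R μ ν α β (t • x)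
          + 6 * t * ∑ r, x r * pd r (R μ ν α β) (t • x)
          + t ^ 2 * ∑ r, x r * ∑ l, x l * pd l (pd r (R μ ν α β)) (t • x)) :=
        (integral_sub_sq_mul_radial_eq (hsmooth μ ν α β) x).symm
    _ = ∫ t in (0 : ℝ)..1, linearizedRiemann
          (fun a b y => (t - t ^ 2) * posContract₂ (fun l r => R a l b r) t y) μ ν α β x := by
        refine integral_congr fun t _ => ?_
        rw [linearizedRiemann_const_mul, linearizedRiemann_posContract₂ hsmooth hcurv
          (fun y l a b c d => hbianchi l a b c d y)]
    _ = linearizedRiemann h μ ν α β x := by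
        rw [hpot, linearizedRiemann_intervalIntegral (F := fun a b p =>
          (p.2 - p.2 ^ 2) * posContract₂ (fun l r => R a l b r) p.2 p.1)
          fun a b => (contDiff_snd.sub (contDiff_snd.pow 2)).mul
            (contDiff_posContract₂ fun l r => hsmooth a l b r)]

/-- Explicit homotopy formula: if `R_{μναβ}` is a smooth tensor field on `ℝ^D` with
the algebraic Riemann symmetries satisfying the second Bianchi identity, then the
potential `h_{αβ}(x) = ∫₀¹ dt ∫₀ᵗ dt' t' Σ_{λμ} x^λ x^μ R_{αλβμ}(t'x)` satisfies
`R_{μναβ} = ∂_μ∂_α h_{νβ} − ∂_ν∂_α h_{μβ} − ∂_μ∂_β h_{να} + ∂_ν∂_β h_{μα}`. -/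
theorem riemann_homotopy_formula (D : ℕ) (hD : 1 ≤ D)
    (R : Fin D → Fin D → Fin D → Fin D → (Fin D → ℝ) → ℝ)
    (hsmooth : ∀ μ ν α β, ContDiff ℝ (⊤ : ℕ∞) (R μ ν α β))
    (hanti1 : ∀ μ ν α β x, R μ ν α β x = - R ν μ α β x)
    (hanti2 : ∀ μ ν α β x, R μ ν α β x = - R μ ν β α x)
    (hpair : ∀ μ ν α β x, R μ ν α β x = R α β μ ν x)
    (hcyclic : ∀ μ ν α β x, R μ ν α β x + R ν α μ β x + R α μ ν β x = 0)
    (hbianchi : ∀ lam μ ν α β x,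
      pd lam (R μ ν α β) x + pd μ (R ν lam α β) x + pd ν (R lam μ α β) x = 0)
    (h : Fin D → Fin D → (Fin D → ℝ) → ℝ)
    (hh : ∀ α β x, h α β x =
      ∫ t in (0:ℝ)..1, ∫ t' in (0:ℝ)..t,
        t' * ∑ lam : Fin D, ∑ μ : Fin D, x lam * x μ * R α lam β μ (t' • x)) :
    ∀ μ ν α β x,
      R μ ν α β x = pd μ (pd α (h ν β)) x - pd ν (pd α (h μ β)) x
        - pd μ (pd β (h ν α)) x + pd ν (pd β (h μ α)) x :=
  riemann_homotopy_formula_general D R hsmooth hanti1 hanti2 hpair hcyclic hbianchi h hh
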